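/- The Rado bit graph R_ℕ is ultrahomogeneous and universal for countable graphs: every graph isomorphism between two finite induced subgraphs of R_ℕ extends to an automorphism of R_ℕ, and every simple graph on a countable vertex type is isomorphic to an induced subgraph of R_ℕ (i.e., admits a graph embedding into R_ℕ). -/

import Mathlib

/-!
Both halves follow from the extension property: for disjoint finite vertex sets `A` and `B` there is
a vertex outside `B` adjacent to every vertex of `A` and to none of `B`. It extends any finite
partial isomorphism by one vertex, on either side, so the back-and-forth argument for countable
structures (Fraïssé theory in the language of graphs) yields ultrahomogeneity, and its forth half
embeds every countable graph. In the Rado bit graph, for `k` beyond every element of `A ∪ B`, the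
vertex `z = 2 ^ k + ∑ a ∈ A, 2 ^ a` is a witness: its set bits are `A ∪ {k}`, and `b < z` for every
`b ∈ B`, so bit `z` of `b` is zero.
-/

/-- The Rado bit graph: distinct naturals `m`, `n` are adjacent iff the `n`-th binary
digit of `m` is 1 or the `m`-th binary digit of `n` is 1. -/
def radoGraph : SimpleGraph ℕ where
  Adj m n := m ≠ n ∧ (Nat.testBit m n = true ∨ Nat.testBit n m = true)
  symm := ⟨fun m n ⟨h, h'⟩ => ⟨h.symm, h'.symm⟩⟩
  loopless := ⟨fun m ⟨h, _⟩ => h rfl⟩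

open Finset

theorem Nat.testBit_sum_two_pow (s : Finset ℕ) (j : ℕ) :
    (∑ i ∈ s, 2 ^ i).testBit j ↔ j ∈ s := by
  rw [← Nat.mem_bitIndices, ← List.mem_toFinset, Finset.toFinset_bitIndices_sum_two_pow]

namespace SimpleGraph

variable {V W : Type*} {G : SimpleGraph V} {H : SimpleGraph W}

def HasExtensionProperty (G : SimpleGraph V) : Prop :=
  ∀ A B : Finset V, Disjoint A B → ∃ z ∉ B, (∀ a ∈ A, G.Adj z a) ∧ ∀ b ∈ B, ¬G.Adj z b

theorem HasExtensionProperty.exists_adj_iff (hH : H.HasExtensionProperty) {ι : Type*} [Finite ι]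
    (f : ι ↪ W) (p : ι → Prop) : ∃ z, (∀ i, f i ≠ z) ∧ ∀ i, H.Adj z (f i) ↔ p i := by
  classical
  have := Fintype.ofFinite ι
  obtain ⟨z, hz_notMem, hz_adj, hz_nonadj⟩ :=
    hH ((univ.filter p).map f) ((univ.filter (¬p ·)).map f)
      (by rw [disjoint_map]; exact disjoint_filter_filter_not _ _ _)
  have hz : ∀ i, H.Adj z (f i) ↔ p i := fun i =>
    ⟨fun h => by_contra fun hi => hz_nonadj _ (mem_map_of_mem _ (by simpa using hi)) h,
      fun hi => hz_adj _ (mem_map_of_mem _ (by simpa using hi))⟩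
  refine ⟨z, fun i hi => ?_, hz⟩
  by_cases hpi : p i
  · exact ((hz i).2 hpi).ne' hi
  · exact hz_notMem (hi ▸ mem_map_of_mem _ (by simpa using hpi))

theorem HasExtensionProperty.exists_extend (hH : H.HasExtensionProperty) {S : Set V}
    (hS : S.Finite) (f : G.induce S ↪g H) (m : V) :
    ∃ g : G.induce (insert m S) ↪g H,
      ∀ x : S, g (Set.inclusion (Set.subset_insert m S) x) = f x := by
  classical
  have := hS.to_subtype
  obtain ⟨z, hz_ne, hz_adj⟩ := hH.exists_adj_iff f.toEmbedding (fun x => G.Adj m x)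
  let F : V → W := fun x => if h : x ∈ S then f ⟨x, h⟩ else z
  have eq_m : ∀ x ∈ insert m S, x ∉ S → x = m := fun x hx hxS => hx.resolve_right hxS
  have adj_F : ∀ x ∈ insert m S, ∀ y ∈ S, H.Adj (F x) (F y) ↔ G.Adj x y := by
    intro x hx y hy
    by_cases hxS : x ∈ S
    · simp only [F, dif_pos hxS, dif_pos hy]
      exact f.map_adj_iff
    · obtain rfl := eq_m x hx hxS
      simp only [F, dif_neg hxS, dif_pos hy]
      exact hz_adj ⟨y, hy⟩
  have inj_F : ∀ x ∈ insert m S, ∀ y ∈ S, F x = F y → x = y := by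
    intro x hx y hy hxy
    by_cases hxS : x ∈ S
    · simp only [F, dif_pos hxS, dif_pos hy] at hxy
      exact congrArg Subtype.val (f.injective hxy)
    · simp only [F, dif_neg hxS, dif_pos hy] at hxy
      exact absurd hxy.symm (hz_ne _)
  refine ⟨⟨⟨fun x => F x, fun x y hxy => Subtype.ext ?_⟩, fun {x y} => ?_⟩, fun x => dif_pos x.2⟩
  · by_cases hy : y.1 ∈ S
    · exact inj_F x x.2 y hy hxy
    by_cases hx : x.1 ∈ S
    · exact (inj_F y y.2 x hx hxy.symm).symm
    · rw [eq_m x x.2 hx, eq_m y y.2 hy]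
  · show H.Adj (F x) (F y) ↔ G.Adj x y
    by_cases hy : y.1 ∈ S
    · exact adj_F x x.2 y hy
    by_cases hx : x.1 ∈ S
    · rw [H.adj_comm, G.adj_comm]
      exact adj_F y y.2 x hx
    · rw [eq_m x x.2 hx, eq_m y y.2 hy]
      simp

end SimpleGraph

namespace FirstOrder.Language

variable {V W : Type*} {G : SimpleGraph V} {H : SimpleGraph W}

instance : IsEmpty (Language.graph.Relations 0) := ⟨fun r => by cases r⟩

def Embedding.toSimpleGraphEmbedding
    (f : letI := G.structure; letI := H.structure; V ↪[Language.graph] W) : G ↪g H :=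
  letI := G.structure; letI := H.structure
  ⟨f.toEmbedding, fun {a b} => f.map_rel adj ![a, b]⟩

def Equiv.toSimpleGraphIso
    (f : letI := G.structure; letI := H.structure; V ≃[Language.graph] W) : G ≃g H :=
  letI := G.structure; letI := H.structure
  ⟨f.toEquiv, fun {a b} => f.map_rel adj ![a, b]⟩

/- The structure a substructure `S` inherits is not definitionally `(G.induce S).structure`,
hence separate conversions for substructures. -/

def Embedding.toInduceEmbedding {S : @Substructure Language.graph V G.structure}
    (f : letI := G.structure; letI := H.structure; S ↪[Language.graph] W) :
    G.induce (S : Set V) ↪g H :=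
  letI := G.structure; letI := H.structure
  ⟨f.toEmbedding, fun {a b} => f.map_rel adj ![a, b]⟩

def _root_.SimpleGraph.Embedding.toSubstructureEmbedding
    {S : @Substructure Language.graph V G.structure} (g : G.induce (S : Set V) ↪g H) :
    letI := G.structure; letI := H.structure; S ↪[Language.graph] W :=
  letI := G.structure; letI := H.structure
  { g.toEmbedding with
    map_fun' := fun {_} f => isEmptyElim f
    map_rel' := fun {n} r x => by
      match n, r with
      | 2, .adj => exact g.map_adj_iff }

theorem Substructure.coe_closure_singleton_sup {M : Type*} {L : Language} [L.Structure M]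
    [L.IsRelational] (m : M) (S : L.Substructure M) :
    ((Substructure.closure L {m} ⊔ S : L.Substructure M) : Set M) = insert m (S : Set M) := by
  rw [← Substructure.closure_eq S, ← Substructure.closure_insert,
    Substructure.closure_eq_of_isRelational, Substructure.closure_eq]

end FirstOrder.Language

open FirstOrder Language

namespace SimpleGraph

variable {V W : Type*} {H : SimpleGraph W}

theorem HasExtensionProperty.isExtensionPair (hH : H.HasExtensionProperty) (G : SimpleGraph V) :
    letI := G.structure; letI := H.structure; Language.graph.IsExtensionPair V W := by
  let := G.structure; let := H.structure
  rw [isExtensionPair_iff_exists_embedding_closure_singleton_sup]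
  intro S hS f m
  obtain ⟨g, hg⟩ := hH.exists_extend (Set.finite_coe_iff.1 hS.finite) f.toInduceEmbedding m
  refine ⟨(g.comp (G.induceHomOfLE
    (Substructure.coe_closure_singleton_sup m S).le)).toSubstructureEmbedding, ?_⟩
  ext x
  exact (hg x).symm

theorem HasExtensionProperty.isUltrahomogeneous [Countable W] (hH : H.HasExtensionProperty) :
    letI := H.structure; Language.graph.IsUltrahomogeneous W :=
  let := H.structure
  (isUltrahomogeneous_iff_IsExtensionPair Structure.cg_of_countable).2 (hH.isExtensionPair H)

theorem HasExtensionProperty.exists_iso_extend [Countable W] (hH : H.HasExtensionProperty)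
    {S T : Set W} (hS : S.Finite) (e : H.induce S ≃g H.induce T) :
    ∃ φ : H ≃g H, ∀ x : S, φ x = e x := by
  let := H.structure
  let U := Substructure.closure Language.graph S
  have hU : (U : Set W) = S := Substructure.closure_eq_of_isRelational _ S
  obtain ⟨φ, hφ⟩ := hH.isUltrahomogeneous U (Substructure.fg_closure hS)
    ((Embedding.induce T).comp
      (e.toEmbedding.comp (H.induceHomOfLE hU.le))).toSubstructureEmbedding
  exact ⟨φ.toSimpleGraphIso, fun x => (DFunLike.congr_fun hφ ⟨x, hU.ge x.2⟩).symm⟩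

theorem HasExtensionProperty.nonempty_embedding [Countable V] (hH : H.HasExtensionProperty)
    (G : SimpleGraph V) : Nonempty (G ↪g H) :=
  let := G.structure; let := H.structure
  have ⟨f, _⟩ := embedding_from_cg Structure.cg_of_countable default (hH.isExtensionPair G)
  ⟨f.toSimpleGraphEmbedding⟩

end SimpleGraph

theorem radoGraph_hasExtensionProperty : radoGraph.HasExtensionProperty := by
  intro A B hAB
  obtain ⟨k, hk⟩ := exists_nat_subset_range (A ∪ B)
  set z := ∑ i ∈ insert k A, 2 ^ i
  have hlt : ∀ x ∈ A ∪ B, x < z := fun x hx =>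
    calc x < k := mem_range.1 (hk hx)
      _ < 2 ^ k := k.lt_two_pow_self
      _ ≤ z := single_le_sum (fun _ _ => Nat.zero_le _) (mem_insert_self k A)
  refine ⟨z, fun hz => (hlt z (mem_union_right _ hz)).false, fun a ha => ?_, fun b hb hzb => ?_⟩
  · exact ⟨(hlt a (mem_union_left _ ha)).ne',
      Or.inl ((Nat.testBit_sum_two_pow _ a).2 (mem_insert_of_mem ha))⟩
  · have hbz := hlt b (mem_union_right _ hb)
    obtain ⟨-, h | h⟩ := hzb
    · rcases mem_insert.1 ((Nat.testBit_sum_two_pow _ b).1 h) with rfl | hbA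
      · exact (mem_range.1 (hk (mem_union_right A hb))).false
      · exact disjoint_left.1 hAB hbA hb
    · rw [Nat.testBit_eq_false_of_lt (hbz.trans z.lt_two_pow_self)] at h
      exact Bool.false_ne_true h

/-- The Rado bit graph is ultrahomogeneous (every isomorphism between finite induced
subgraphs extends to an automorphism) and universal for countable graphs. -/
theorem radoGraph_ultrahomogeneous_and_universal :
    (∀ (S T : Finset ℕ)
      (e : radoGraph.induce (S : Set ℕ) ≃g radoGraph.induce (T : Set ℕ)),
      ∃ φ : radoGraph ≃g radoGraph, ∀ x : (S : Set ℕ), φ (x : ℕ) = ((e x : (T : Set ℕ)) : ℕ)) ∧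
    (∀ (V : Type) [Countable V] (G : SimpleGraph V), Nonempty (G ↪g radoGraph)) :=
  ⟨fun S _ e => radoGraph_hasExtensionProperty.exists_iso_extend S.finite_toSet e,
    fun _ _ G => radoGraph_hasExtensionProperty.nonempty_embedding G⟩
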